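/- Let k be a positive integer and let G_1, …, G_k be finite simple graphs, each with at least one vertex, such that G_i is r_i-regular and the degrees r_1, …, r_k are pairwise distinct. Then the palette index of the disjoint union of G_1, …, G_k equals the sum of their palette indices: š(G_1 ⊔ ⋯ ⊔ G_k) = š(G_1) + ⋯ + š(G_k). -/

import Mathlib

open SimpleGraph

/-- `c` is a proper edge-coloring of `G`: distinct edges sharing a vertex
receive distinct colors. -/
def IsProperEdgeColoring {V : Type*} (G : SimpleGraph V) (c : Sym2 V → ℕ) : Prop :=
  ∀ e₁ ∈ G.edgeSet, ∀ e₂ ∈ G.edgeSet, e₁ ≠ e₂ → (∃ v, v ∈ e₁ ∧ v ∈ e₂) → c e₁ ≠ c e₂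

/-- The palette of a vertex `v`: the set of colors of edges incident with `v`. -/
def palette {V : Type*} (G : SimpleGraph V) (c : Sym2 V → ℕ) (v : V) : Set ℕ :=
  c '' (G.incidenceSet v)

/-- The number of distinct palettes occurring among the vertices. -/
noncomputable def numPalettes {V : Type*} (G : SimpleGraph V) (c : Sym2 V → ℕ) : ℕ :=
  (Set.range (palette G c)).ncard

/-- The palette index of `G`: the minimum number of distinct palettes over all
proper edge-colorings of `G`. -/
noncomputable def paletteIndex {V : Type*} (G : SimpleGraph V) : ℕ :=
  sInf { n | ∃ c, IsProperEdgeColoring G c ∧ numPalettes G c = n }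

/-- `G` has a spanning even subgraph without isolated vertices. -/
def ExistsSpanningEvenNoIsolated {V : Type*} (G : SimpleGraph V) : Prop :=
  ∃ K : SimpleGraph V, K ≤ G ∧ (∀ v, Even (K.neighborSet v).ncard) ∧
    (∀ v, 1 ≤ (K.neighborSet v).ncard)

/-- The disjoint union of a family of graphs. -/
def disjUnionGraph {ι : Type*} {V : ι → Type*} (G : ∀ i, SimpleGraph (V i)) :
    SimpleGraph (Σ i, V i) where
  Adj x y := ∃ (i : ι) (a b : V i), (G i).Adj a b ∧ x = ⟨i, a⟩ ∧ y = ⟨i, b⟩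
  symm := by
    constructor
    rintro x y ⟨i, a, b, h, rfl, rfl⟩
    exact ⟨i, b, a, h.symm, rfl, rfl⟩
  loopless := by
    constructor
    rintro x ⟨i, a, b, h, rfl, h2⟩
    obtain rfl : a = b := by simpa using h2
    exact (G i).loopless.irrefl a h

/-! A proper coloring gives every vertex a palette whose size is its degree. So when the
components are regular of pairwise distinct degrees, no palette occurs in two components, and the
number of palettes of the union is the sum over the components. Since colorings of the components
glue to a coloring of the union and a coloring of the union restricts to each component, the
minima add up as well. -/

section Palette

variable {W : Type*} {H : SimpleGraph W} {c : Sym2 W → ℕ}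

lemma IsProperEdgeColoring.ncard_palette (hc : IsProperEdgeColoring H c) (v : W) :
    (palette H c v).ncard = (H.neighborSet v).ncard := by
  classical
  have hinj : Set.InjOn c (H.incidenceSet v) := fun e₁ h₁ e₂ h₂ hce => by
    by_contra hne
    exact hc e₁ h₁.1 e₂ h₂.1 hne ⟨v, h₁.2, h₂.2⟩ hce
  rw [palette, hinj.ncard_image, ← Nat.card_coe_set_eq, ← Nat.card_coe_set_eq]
  exact Nat.card_congr (H.incidenceSetEquivNeighborSet v)

lemma exists_isProperEdgeColoring [Countable W] (H : SimpleGraph W) :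
    ∃ c, IsProperEdgeColoring H c := by
  obtain ⟨f, hf⟩ := (countable_iff_exists_injective (Sym2 W)).mp inferInstance
  exact ⟨f, fun _ _ _ _ hne _ h => hne (hf h)⟩

lemma exists_numPalettes_eq_paletteIndex [Countable W] (H : SimpleGraph W) :
    ∃ c, IsProperEdgeColoring H c ∧ numPalettes H c = paletteIndex H := by
  obtain ⟨c, hc⟩ := exists_isProperEdgeColoring H
  exact Nat.sInf_mem (s := {n | ∃ c, IsProperEdgeColoring H c ∧ numPalettes H c = n})
    ⟨_, c, hc, rfl⟩

lemma paletteIndex_le_numPalettes (hc : IsProperEdgeColoring H c) :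
    paletteIndex H ≤ numPalettes H c :=
  Nat.sInf_le ⟨c, hc, rfl⟩

end Palette

section DisjUnion

variable {ι : Type*} {V : ι → Type*} {G : ∀ i, SimpleGraph (V i)}

lemma mem_edgeSet_disjUnionGraph {e : Sym2 (Σ i, V i)} :
    e ∈ (disjUnionGraph G).edgeSet ↔
      ∃ i, ∃ f ∈ (G i).edgeSet, Sym2.map (Sigma.mk i) f = e := by
  constructor
  · induction e using Sym2.ind with
    | _ x y =>
      rintro ⟨i, a, b, hab, rfl, rfl⟩
      exact ⟨i, s(a, b), hab, rfl⟩
  · rintro ⟨i, f, hf, rfl⟩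
    induction f using Sym2.ind with
    | _ a b => exact ⟨i, a, b, hf, rfl, rfl⟩

lemma incidenceSet_disjUnionGraph (i : ι) (v : V i) :
    (disjUnionGraph G).incidenceSet ⟨i, v⟩ =
      Sym2.map (Sigma.mk i) '' (G i).incidenceSet v := by
  ext e
  constructor
  · rintro ⟨he, hv⟩
    obtain ⟨j, f, hf, rfl⟩ := mem_edgeSet_disjUnionGraph.mp he
    obtain ⟨a, ha, hav⟩ := Sym2.mem_map.mp hv
    obtain ⟨rfl, hav⟩ := Sigma.mk.inj_iff.mp hav
    obtain rfl := eq_of_heq hav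
    exact ⟨f, ⟨hf, ha⟩, rfl⟩
  · rintro ⟨f, ⟨hf, hv⟩, rfl⟩
    exact ⟨mem_edgeSet_disjUnionGraph.mpr ⟨i, f, hf, rfl⟩, Sym2.mem_map.mpr ⟨v, hv, rfl⟩⟩

lemma IsProperEdgeColoring.comp_map_sigmaMk {c : Sym2 (Σ i, V i) → ℕ}
    (hc : IsProperEdgeColoring (disjUnionGraph G) c) (i : ι) :
    IsProperEdgeColoring (G i) (c ∘ Sym2.map (Sigma.mk i)) :=
  fun e₁ he₁ e₂ he₂ hne ⟨v, hv₁, hv₂⟩ =>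
    hc _ (mem_edgeSet_disjUnionGraph.mpr ⟨i, e₁, he₁, rfl⟩)
      _ (mem_edgeSet_disjUnionGraph.mpr ⟨i, e₂, he₂, rfl⟩)
      (fun h => hne (Sym2.map.injective sigma_mk_injective h))
      ⟨⟨i, v⟩, Sym2.mem_map.mpr ⟨v, hv₁, rfl⟩, Sym2.mem_map.mpr ⟨v, hv₂, rfl⟩⟩

lemma palette_disjUnionGraph (c : Sym2 (Σ i, V i) → ℕ) (i : ι) (v : V i) :
    palette (disjUnionGraph G) c ⟨i, v⟩ = palette (G i) (c ∘ Sym2.map (Sigma.mk i)) v := by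
  rw [palette, palette, incidenceSet_disjUnionGraph, Set.image_image]
  rfl

lemma range_palette_disjUnionGraph (c : Sym2 (Σ i, V i) → ℕ) :
    Set.range (palette (disjUnionGraph G) c) =
      ⋃ i, Set.range (palette (G i) (c ∘ Sym2.map (Sigma.mk i))) := by
  simp only [Set.range_sigma_eq_iUnion_range, palette_disjUnionGraph]

open scoped Function in
lemma numPalettes_disjUnionGraph [Fintype ι] [∀ i, Finite (V i)] {r : ι → ℕ}
    (hreg : ∀ i v, ((G i).neighborSet v).ncard = r i) (hr : Function.Injective r)
    {c : Sym2 (Σ i, V i) → ℕ} (hc : IsProperEdgeColoring (disjUnionGraph G) c) :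
    numPalettes (disjUnionGraph G) c =
      ∑ i, numPalettes (G i) (c ∘ Sym2.map (Sigma.mk i)) := by
  have hdisj :
      Pairwise (Disjoint on fun i => Set.range (palette (G i) (c ∘ Sym2.map (Sigma.mk i)))) := by
    intro i j hij
    refine Set.disjoint_left.mpr ?_
    rintro _ ⟨v, rfl⟩ ⟨w, hw⟩
    refine hij (hr ?_)
    rw [← hreg i v, ← hreg j w, ← (hc.comp_map_sigmaMk i).ncard_palette,
      ← (hc.comp_map_sigmaMk j).ncard_palette, hw]
  rw [numPalettes, range_palette_disjUnionGraph,
    Set.ncard_iUnion_of_finite (fun i => Set.finite_range _) hdisj, finsum_eq_sum_of_fintype]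
  rfl

variable [DecidableEq ι]

/-- Pairs of vertices in different components, which are never edges, get the color `0`. -/
def sigmaColoring (c : ∀ i, Sym2 (V i) → ℕ) : Sym2 (Σ i, V i) → ℕ :=
  Sym2.lift ⟨fun x y => if h : y.1 = x.1 then c x.1 s(x.2, h ▸ y.2) else 0, by
    rintro ⟨i, a⟩ ⟨j, b⟩
    rcases eq_or_ne i j with rfl | hne
    · simp [Sym2.eq_swap]
    · simp [hne, Ne.symm hne]⟩

lemma sigmaColoring_map (c : ∀ i, Sym2 (V i) → ℕ) (i : ι) (f : Sym2 (V i)) :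
    sigmaColoring c (Sym2.map (Sigma.mk i) f) = c i f := by
  induction f using Sym2.ind with
  | _ a b => simp [sigmaColoring]

lemma sigmaColoring_comp_map (c : ∀ i, Sym2 (V i) → ℕ) (i : ι) :
    sigmaColoring c ∘ Sym2.map (Sigma.mk i) = c i :=
  funext (sigmaColoring_map c i)

lemma isProperEdgeColoring_sigmaColoring {c : ∀ i, Sym2 (V i) → ℕ}
    (hc : ∀ i, IsProperEdgeColoring (G i) (c i)) :
    IsProperEdgeColoring (disjUnionGraph G) (sigmaColoring c) := by
  intro e₁ he₁ e₂ he₂ hne ⟨w, hw₁, hw₂⟩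
  obtain ⟨i, f₁, hf₁, rfl⟩ := mem_edgeSet_disjUnionGraph.mp he₁
  obtain ⟨j, f₂, hf₂, rfl⟩ := mem_edgeSet_disjUnionGraph.mp he₂
  obtain ⟨u₁, hu₁, rfl⟩ := Sym2.mem_map.mp hw₁
  obtain ⟨u₂, hu₂, hu⟩ := Sym2.mem_map.mp hw₂
  obtain ⟨rfl, hu⟩ := Sigma.mk.inj_iff.mp hu
  obtain rfl := eq_of_heq hu
  rw [sigmaColoring_map, sigmaColoring_map]
  exact hc _ f₁ hf₁ f₂ hf₂ (fun h => hne (by rw [h])) ⟨u₂, hu₁, hu₂⟩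

end DisjUnion

theorem palette_index_disjoint_union_general (k : ℕ)
    (V : Fin k → Type*) [∀ i, Fintype (V i)]
    (G : ∀ i, SimpleGraph (V i)) (r : Fin k → ℕ)
    (hreg : ∀ i, ∀ v, ((G i).neighborSet v).ncard = r i)
    (hinj : Function.Injective r) :
    paletteIndex (disjUnionGraph G) = ∑ i, paletteIndex (G i) := by
  refine le_antisymm ?_ ?_
  · choose c hc hcmin using fun i => exists_numPalettes_eq_paletteIndex (G i)
    have hglue := isProperEdgeColoring_sigmaColoring hc
    calc paletteIndex (disjUnionGraph G)
        ≤ numPalettes (disjUnionGraph G) (sigmaColoring c) := paletteIndex_le_numPalettes hglue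
      _ = ∑ i, paletteIndex (G i) := by
        simp only [numPalettes_disjUnionGraph hreg hinj hglue, sigmaColoring_comp_map, hcmin]
  · obtain ⟨c, hc, hcmin⟩ := exists_numPalettes_eq_paletteIndex (disjUnionGraph G)
    rw [← hcmin, numPalettes_disjUnionGraph hreg hinj hc]
    exact Finset.sum_le_sum fun i _ => paletteIndex_le_numPalettes (hc.comp_map_sigmaMk i)

theorem palette_index_disjoint_union (k : ℕ) (hk : 0 < k)
    (V : Fin k → Type*) [∀ i, Fintype (V i)] [∀ i, Nonempty (V i)]
    (G : ∀ i, SimpleGraph (V i)) (r : Fin k → ℕ)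
    (hreg : ∀ i, ∀ v, ((G i).neighborSet v).ncard = r i)
    (hinj : Function.Injective r) :
    paletteIndex (disjUnionGraph G) = ∑ i, paletteIndex (G i) :=
  palette_index_disjoint_union_general k V G r hreg hinj
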